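/- (The canonical gradient is mean-zero.) When the nuisances are the truth, η = (g_t, m_t)_{t=1}^τ with g_t the true treatment probabilities and m_t the true sequential regression functions, the pseudo-outcome integrates to the parameter: E[φ_1(Z; η)] = θ, where θ = E[q_1(A_1, H_1)]. Equivalently, the canonical gradient φ̄_1(Z) = φ_1(Z; η) − θ has mean zero. -/

import Mathlib

open MeasureTheory Finset

namespace GLMTP

variable {τ : ℕ}

/-- Augmented natural-treatment history: one treatment value for each time index `< tp`
(0-based; the paper's `s̄_t` corresponds to `tp = t`). -/
abbrev SbarN (𝓐 : Fin τ → Type) (tp : ℕ) : Type :=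
  ∀ s : {s : Fin τ // s.val < tp}, 𝓐 s.1

/-- Observed history `H_t = (L_1, A_1, …, A_{t-1}, L_t)`: covariates up to (and including)
time `t` and treatments strictly before time `t`. -/
abbrev Hist (𝓐 𝓛 : Fin τ → Type) (t : Fin τ) : Type :=
  (∀ s : {s : Fin τ // s ≤ t}, 𝓛 s.1) × (∀ s : {s : Fin τ // s < t}, 𝓐 s.1)

/-- A generalized longitudinal modified treatment policy: at each time `t` it maps the
history of natural treatment values `(a_1, …, a_t)` and the history `h_t` to a treatment. -/
abbrev Policy (𝓐 𝓛 : Fin τ → Type) : Type :=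
  ∀ t : Fin τ, SbarN 𝓐 (t.val + 1) → Hist 𝓐 𝓛 t → 𝓐 t

variable {𝓐 𝓛 : Fin τ → Type}

/-- The empty augmented history `s̄_0`. -/
def emptySbar (𝓐 : Fin τ → Type) : SbarN 𝓐 0 :=
  fun s => absurd s.2 (Nat.not_lt_zero _)

def restrictSb {tp tp' : ℕ} (h : tp' ≤ tp) (sb : SbarN 𝓐 tp) : SbarN 𝓐 tp' :=
  fun s => sb ⟨s.1, lt_of_lt_of_le s.2 h⟩

/-- Append a treatment value at time `t` to an augmented history `s̄_{t-1}`. -/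
def snoc {t : Fin τ} (sb : SbarN 𝓐 t.val) (a : 𝓐 t) : SbarN 𝓐 (t.val + 1) :=
  fun s =>
    if h : s.1 = t then cast (congrArg 𝓐 h).symm a
    else sb ⟨s.1, lt_of_le_of_ne (Nat.lt_succ_iff.mp s.2) (fun hv => h (Fin.ext hv))⟩

/-- Extension of an augmented history: treatment values at times `tp ≤ u ≤ k` (0-based),
i.e. the summation variables `s_{t+1}, …, s_k` of the paper. -/
abbrev Ext (𝓐 : Fin τ → Type) (tp : ℕ) (k : Fin τ) : Type :=
  ∀ s : {s : Fin τ // tp ≤ s.val ∧ s.val ≤ k.val}, 𝓐 s.1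

def mergeExt {tp : ℕ} {k : Fin τ} (sb : SbarN 𝓐 tp) (e : Ext 𝓐 tp k) :
    SbarN 𝓐 (k.val + 1) :=
  fun s =>
    if h : s.1.val < tp then sb ⟨s.1, h⟩
    else e ⟨s.1, ⟨not_lt.mp h, Nat.lt_succ_iff.mp s.2⟩⟩

/-- The observed data structure `Z = (L_1, A_1, …, L_τ, A_τ, Y)` with its law `μ`. -/
structure Model (𝓐 𝓛 : Fin τ → Type) (Ω : Type) [MeasurableSpace Ω] where
  μ : Measure Ω
  L : ∀ t : Fin τ, Ω → 𝓛 t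
  A : ∀ t : Fin τ, Ω → 𝓐 t
  Y : Ω → ℝ

variable {Ω : Type} [MeasurableSpace Ω]

/-- The observed history process `ω ↦ H_t(ω)`. -/
def Model.Hproc (M : Model 𝓐 𝓛 Ω) (t : Fin τ) (ω : Ω) : Hist 𝓐 𝓛 t :=
  (fun s => M.L s.1 ω, fun s => M.A s.1 ω)

/-- The event `{H_t = h}`. -/
def Model.histEvent (M : Model 𝓐 𝓛 Ω) (t : Fin τ) (h : Hist 𝓐 𝓛 t) : Set Ω :=
  {ω | M.Hproc t ω = h}

/-- The event `{A_t = a, H_t = h}`. -/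
def Model.condEvent (M : Model 𝓐 𝓛 Ω) (t : Fin τ) (a : 𝓐 t) (h : Hist 𝓐 𝓛 t) : Set Ω :=
  {ω | M.A t ω = a} ∩ M.histEvent t h

/-- Conditional expectation given an event, defined as a ratio. -/
noncomputable def condExpOn (μ : Measure Ω) (S : Set Ω) (X : Ω → ℝ) : ℝ :=
  (∫ ω in S, X ω ∂μ) / (μ S).toReal

/-- The true treatment mechanism `g_t(a ∣ h) = P(A_t = a ∣ H_t = h)`. -/
noncomputable def Model.g (M : Model 𝓐 𝓛 Ω) (t : Fin τ) (a : 𝓐 t) (h : Hist 𝓐 𝓛 t) : ℝ :=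
  (M.μ (M.condEvent t a h)).toReal / (M.μ (M.histEvent t h)).toReal

/-- Full positivity: `P(A_t = a, H_t = h) > 0` for every `t`, `a`, `h`. -/
def Model.Positivity (M : Model 𝓐 𝓛 Ω) : Prop :=
  ∀ (t : Fin τ) (a : 𝓐 t) (h : Hist 𝓐 𝓛 t), 0 < M.μ (M.condEvent t a h)

/-- Measurability of the observed variables. -/
def Model.Meas (M : Model 𝓐 𝓛 Ω) : Prop :=
  (∀ (t : Fin τ) (a : 𝓐 t), MeasurableSet {ω | M.A t ω = a}) ∧
  (∀ (t : Fin τ) (l : 𝓛 t), MeasurableSet {ω | M.L t ω = l}) ∧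
  Measurable M.Y

/-- `q_t` obtained from `m_t`:
`q_t(s̄_{t-1}, a_t, h_t) = m_t((s̄_{t-1},a_t), d_t((s̄_{t-1},a_t), h_t), h_t)`. -/
def qOf (d : Policy 𝓐 𝓛)
    (m : ∀ t : Fin τ, SbarN 𝓐 (t.val + 1) → 𝓐 t → Hist 𝓐 𝓛 t → ℝ)
    (t : Fin τ) (sb : SbarN 𝓐 t.val) (a : 𝓐 t) (h : Hist 𝓐 𝓛 t) : ℝ :=
  m t (snoc sb a) (d t (snoc sb a) h) h

/-- `ω ↦ q_{k+1}(s̄_k, A_{k+1}(ω), H_{k+1}(ω))`, with the convention `q_{τ+1} := Y`. -/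
def Model.qNext (M : Model 𝓐 𝓛 Ω)
    (q : ∀ t : Fin τ, SbarN 𝓐 t.val → 𝓐 t → Hist 𝓐 𝓛 t → ℝ)
    (k : Fin τ) (sb : SbarN 𝓐 (k.val + 1)) (ω : Ω) : ℝ :=
  if h : k.val + 1 < τ then
    q ⟨k.val + 1, h⟩ sb (M.A ⟨k.val + 1, h⟩ ω) (M.Hproc ⟨k.val + 1, h⟩ ω)
  else M.Y ω

/-- `m` is the (true) sequential-regression family for the policy `d`:
`m_t(s̄_t, a_t, h_t) = E[q_{t+1}(s̄_t, A_{t+1}, H_{t+1}) ∣ A_t = a_t, H_t = h_t]`,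
with `q_{τ+1} = Y` (so at `t = τ` this reads `m_τ(a_τ,h_τ) = E[Y ∣ A_τ = a_τ, H_τ = h_τ]`,
extended independently of `s̄_τ`). -/
def IsSeqReg (M : Model 𝓐 𝓛 Ω) (d : Policy 𝓐 𝓛)
    (m : ∀ t : Fin τ, SbarN 𝓐 (t.val + 1) → 𝓐 t → Hist 𝓐 𝓛 t → ℝ) : Prop :=
  ∀ (t : Fin τ) (sb : SbarN 𝓐 (t.val + 1)) (a : 𝓐 t) (h : Hist 𝓐 𝓛 t),
    m t sb a h = condExpOn M.μ (M.condEvent t a h) (M.qNext (qOf d m) t sb)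

/-- The parameter `θ = E[q_1(A_1, H_1)]`. -/
noncomputable def theta (hτ : 0 < τ) (M : Model 𝓐 𝓛 Ω) (d : Policy 𝓐 𝓛)
    (m : ∀ t : Fin τ, SbarN 𝓐 (t.val + 1) → 𝓐 t → Hist 𝓐 𝓛 t → ℝ) : ℝ :=
  ∫ ω, qOf d m ⟨0, hτ⟩ (emptySbar 𝓐) (M.A ⟨0, hτ⟩ ω) (M.Hproc ⟨0, hτ⟩ ω) ∂M.μ

variable [∀ t, DecidableEq (𝓐 t)] [∀ t, Fintype (𝓐 t)]

/-- Indicator `D_{t,k}(s̄_k)`: all treatments at times `tp ≤ u ≤ k` (0-based) follow the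
policy applied to the augmented history. -/
noncomputable def Dind (M : Model 𝓐 𝓛 Ω) (d : Policy 𝓐 𝓛) (tp : ℕ) (k : Fin τ)
    (sb : SbarN 𝓐 (k.val + 1)) (ω : Ω) : ℝ :=
  ∏ u : Fin τ,
    if hu : tp ≤ u.val ∧ u.val ≤ k.val then
      (if M.A u ω = d u (restrictSb (Nat.succ_le_succ hu.2) sb) (M.Hproc u ω) then 1 else 0)
    else 1

/-- Density-ratio weight `∏_{u} g'_u(s_u ∣ H_u)/g'_u(A_u ∣ H_u)` over times `tp ≤ u ≤ k`. -/
noncomputable def weight (M : Model 𝓐 𝓛 Ω) (g' : ∀ t : Fin τ, 𝓐 t → Hist 𝓐 𝓛 t → ℝ)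
    (tp : ℕ) (k : Fin τ) (sb : SbarN 𝓐 (k.val + 1)) (ω : Ω) : ℝ :=
  ∏ u : Fin τ,
    if hu : tp ≤ u.val ∧ u.val ≤ k.val then
      g' u (sb ⟨u, Nat.lt_succ_of_le hu.2⟩) (M.Hproc u ω) / g' u (M.A u ω) (M.Hproc u ω)
    else 1

/-- The pseudo-outcome `φ_{t+1}(s̄_t, Z; η')`; here `tp` is the paper's `t` (so times are
0-based internally: the paper's time `u` is the index `u - 1`). -/
noncomputable def phi (M : Model 𝓐 𝓛 Ω) (d : Policy 𝓐 𝓛)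
    (g' : ∀ t : Fin τ, 𝓐 t → Hist 𝓐 𝓛 t → ℝ)
    (m' : ∀ t : Fin τ, SbarN 𝓐 (t.val + 1) → 𝓐 t → Hist 𝓐 𝓛 t → ℝ)
    (tp : ℕ) (sb : SbarN 𝓐 tp) (ω : Ω) : ℝ :=
  (∑ k : Fin τ,
    if tp ≤ k.val then
      ∑ e : Ext 𝓐 tp k,
        Dind M d tp k (mergeExt sb e) ω * weight M g' tp k (mergeExt sb e) ω *
          (M.qNext (qOf d m') k (mergeExt sb e) ω -
            m' k (mergeExt sb e) (M.A k ω) (M.Hproc k ω))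
    else 0) +
  (if h : tp < τ then
      qOf d m' ⟨tp, h⟩ sb (M.A ⟨tp, h⟩ ω) (M.Hproc ⟨tp, h⟩ ω)
    else M.Y ω)

/-- The remainder `Rem_t(s̄_t, a_t, h_t; η')` of Theorem 2, as a function of the conditioning
event `S` (`S = {A_t = a_t, H_t = h_t}`, or `S = univ` for `t = 0`). -/
noncomputable def rem (M : Model 𝓐 𝓛 Ω) (d : Policy 𝓐 𝓛)
    (g' : ∀ t : Fin τ, 𝓐 t → Hist 𝓐 𝓛 t → ℝ)
    (m' mtrue : ∀ t : Fin τ, SbarN 𝓐 (t.val + 1) → 𝓐 t → Hist 𝓐 𝓛 t → ℝ)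
    (tp : ℕ) (sb : SbarN 𝓐 tp) (S : Set Ω) : ℝ :=
  ∑ k : Fin τ,
    if tp ≤ k.val then
      ∑ e : Ext 𝓐 tp k,
        condExpOn M.μ S (fun ω =>
          Dind M d tp k (mergeExt sb e) ω *
          (∏ r : Fin τ,
            if hr : tp ≤ r.val ∧ r.val < k.val then
              g' r (mergeExt sb e ⟨r, Nat.lt_succ_of_lt hr.2⟩) (M.Hproc r ω) /
                g' r (M.A r ω) (M.Hproc r ω)
            else 1) *
          (M.g k (mergeExt sb e ⟨k, Nat.lt_succ_self _⟩) (M.Hproc k ω) /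
              M.g k (M.A k ω) (M.Hproc k ω) -
            g' k (mergeExt sb e ⟨k, Nat.lt_succ_self _⟩) (M.Hproc k ω) /
              g' k (M.A k ω) (M.Hproc k ω)) *
          (m' k (mergeExt sb e) (M.A k ω) (M.Hproc k ω) -
            mtrue k (mergeExt sb e) (M.A k ω) (M.Hproc k ω)))
    else 0


set_option linter.unusedSectionVars false

/-! ### Auxiliary machinery for the mean-zero theorem -/

/-- The full observed path `ω ↦ ((A_t ω)_t, (L_t ω)_t)`. -/
def Model.path (M : Model 𝓐 𝓛 Ω) (ω : Ω) : (∀ t : Fin τ, 𝓐 t) × (∀ t : Fin τ, 𝓛 t) :=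
  (fun t => M.A t ω, fun t => M.L t ω)

/-- The history read off from a full path. -/
def pathHist (p : (∀ t : Fin τ, 𝓐 t) × (∀ t : Fin τ, 𝓛 t)) (t : Fin τ) : Hist 𝓐 𝓛 t :=
  (fun s => p.2 s.1, fun s => p.1 s.1)

lemma Model.hproc_path (M : Model 𝓐 𝓛 Ω) (t : Fin τ) (ω : Ω) :
    M.Hproc t ω = pathHist (M.path ω) t := rfl

lemma Model.measurableSet_path (M : Model 𝓐 𝓛 Ω) (hmeas : M.Meas)
    (p : (∀ t : Fin τ, 𝓐 t) × (∀ t : Fin τ, 𝓛 t)) :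
    MeasurableSet {ω | M.path ω = p} := by
  have hset : {ω | M.path ω = p} =
      (⋂ t, {ω | M.A t ω = p.1 t}) ∩ ⋂ t, {ω | M.L t ω = p.2 t} := by
    ext ω
    simp [Model.path, Prod.ext_iff, funext_iff, Set.mem_iInter]
  rw [hset]
  exact (MeasurableSet.iInter fun t => hmeas.1 t _).inter
    (MeasurableSet.iInter fun t => hmeas.2.1 t _)

lemma integrable_pathFn [∀ t, Fintype (𝓛 t)]
    (M : Model 𝓐 𝓛 Ω) [IsFiniteMeasure M.μ] (hmeas : M.Meas)
    (Φ : ((∀ t : Fin τ, 𝓐 t) × (∀ t : Fin τ, 𝓛 t)) → Ω → ℝ)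
    (hΦ : ∀ p, Integrable (Φ p) M.μ) :
    Integrable (fun ω => Φ (M.path ω) ω) M.μ := by
  classical
  have hrep : (fun ω => Φ (M.path ω) ω) =
      fun ω => ∑ p, Set.indicator {ω' | M.path ω' = p} (Φ p) ω := by
    funext ω
    rw [Finset.sum_eq_single (M.path ω)]
    · simp [Set.indicator_apply]
    · intro p _ hp
      simp only [Set.indicator_apply, Set.mem_setOf_eq]
      exact if_neg fun hh => hp hh.symm
    · simp
  rw [hrep]
  exact integrable_finset_sum _ fun p _ =>
    (hΦ p).indicator (M.measurableSet_path hmeas p)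

lemma Model.measurableSet_histEvent (M : Model 𝓐 𝓛 Ω) (hmeas : M.Meas)
    (t : Fin τ) (h : Hist 𝓐 𝓛 t) : MeasurableSet (M.histEvent t h) := by
  have hset : M.histEvent t h =
      (⋂ s : {s : Fin τ // s ≤ t}, {ω | M.L s.1 ω = h.1 s}) ∩
        ⋂ s : {s : Fin τ // s < t}, {ω | M.A s.1 ω = h.2 s} := by
    ext ω
    simp [Model.histEvent, Model.Hproc, Prod.ext_iff, funext_iff, Set.mem_iInter]
  rw [hset]
  exact (MeasurableSet.iInter fun s => hmeas.2.1 _ _).inter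
    (MeasurableSet.iInter fun s => hmeas.1 _ _)

lemma Model.measurableSet_condEvent (M : Model 𝓐 𝓛 Ω) (hmeas : M.Meas)
    (t : Fin τ) (a : 𝓐 t) (h : Hist 𝓐 𝓛 t) : MeasurableSet (M.condEvent t a h) :=
  (hmeas.1 t a).inter (M.measurableSet_histEvent hmeas t h)

lemma Model.mem_condEvent {M : Model 𝓐 𝓛 Ω} {t : Fin τ} {a : 𝓐 t} {h : Hist 𝓐 𝓛 t}
    {ω : Ω} : ω ∈ M.condEvent t a h ↔ M.A t ω = a ∧ M.Hproc t ω = h := Iff.rfl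

lemma Model.hproc_eq_on {M : Model 𝓐 𝓛 Ω} {k u : Fin τ} (huk : u ≤ k)
    {a : 𝓐 k} {h : Hist 𝓐 𝓛 k} {ω : Ω} (hω : ω ∈ M.condEvent k a h) :
    M.Hproc u ω = ((fun s : {s : Fin τ // s ≤ u} => h.1 ⟨s.1, le_trans s.2 huk⟩,
      fun s : {s : Fin τ // s < u} => h.2 ⟨s.1, lt_of_lt_of_le s.2 huk⟩) : Hist 𝓐 𝓛 u) := by
  obtain ⟨_, hH⟩ := hω
  refine Prod.ext ?_ ?_
  · funext s; exact congrFun (congrArg Prod.fst hH) ⟨s.1, le_trans s.2 huk⟩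
  · funext s; exact congrFun (congrArg Prod.snd hH) ⟨s.1, lt_of_lt_of_le s.2 huk⟩

lemma Model.hproc_eq_on' {M : Model 𝓐 𝓛 Ω} {k u : Fin τ} (huk : u ≤ k)
    {a : 𝓐 k} {h : Hist 𝓐 𝓛 k} {ω ω' : Ω} (hω : ω ∈ M.condEvent k a h)
    (hω' : ω' ∈ M.condEvent k a h) : M.Hproc u ω = M.Hproc u ω' :=
  (Model.hproc_eq_on huk hω).trans (Model.hproc_eq_on huk hω').symm

lemma Model.a_eq_on {M : Model 𝓐 𝓛 Ω} {k u : Fin τ} (huk : u ≤ k)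
    {a : 𝓐 k} {h : Hist 𝓐 𝓛 k} {ω ω' : Ω} (hω : ω ∈ M.condEvent k a h)
    (hω' : ω' ∈ M.condEvent k a h) : M.A u ω = M.A u ω' := by
  rcases lt_or_eq_of_le huk with hlt | heq
  · have h1 := congrFun (congrArg Prod.snd hω.2) ⟨u, hlt⟩
    have h2 := congrFun (congrArg Prod.snd hω'.2) ⟨u, hlt⟩
    exact h1.trans h2.symm
  · subst heq
    exact hω.1.trans hω'.1.symm

lemma Dind_eq_on {M : Model 𝓐 𝓛 Ω} (d : Policy 𝓐 𝓛) (tp : ℕ) {k : Fin τ}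
    (sb : SbarN 𝓐 (k.val + 1)) {a : 𝓐 k} {h : Hist 𝓐 𝓛 k} {ω ω' : Ω}
    (hω : ω ∈ M.condEvent k a h) (hω' : ω' ∈ M.condEvent k a h) :
    Dind M d tp k sb ω = Dind M d tp k sb ω' := by
  unfold Dind
  refine Finset.prod_congr rfl fun u _ => ?_
  by_cases hu : tp ≤ u.val ∧ u.val ≤ k.val
  · have huk : u ≤ k := Fin.mk_le_mk.mpr hu.2
    rw [dif_pos hu, dif_pos hu, Model.a_eq_on huk hω hω', Model.hproc_eq_on' huk hω hω']
  · rw [dif_neg hu, dif_neg hu]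

lemma weight_eq_on {M : Model 𝓐 𝓛 Ω} (g' : ∀ t : Fin τ, 𝓐 t → Hist 𝓐 𝓛 t → ℝ)
    (tp : ℕ) {k : Fin τ} (sb : SbarN 𝓐 (k.val + 1)) {a : 𝓐 k} {h : Hist 𝓐 𝓛 k}
    {ω ω' : Ω} (hω : ω ∈ M.condEvent k a h) (hω' : ω' ∈ M.condEvent k a h) :
    weight M g' tp k sb ω = weight M g' tp k sb ω' := by
  unfold weight
  refine Finset.prod_congr rfl fun u _ => ?_
  by_cases hu : tp ≤ u.val ∧ u.val ≤ k.val
  · have huk : u ≤ k := Fin.mk_le_mk.mpr hu.2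
    rw [dif_pos hu, dif_pos hu, Model.a_eq_on huk hω hω', Model.hproc_eq_on' huk hω hω']
  · rw [dif_neg hu, dif_neg hu]


/-- Path-version of `Dind`. -/
noncomputable def DindP (d : Policy 𝓐 𝓛) (tp : ℕ) (k : Fin τ) (sb : SbarN 𝓐 (k.val + 1))
    (p : (∀ t : Fin τ, 𝓐 t) × (∀ t : Fin τ, 𝓛 t)) : ℝ :=
  ∏ u : Fin τ,
    if hu : tp ≤ u.val ∧ u.val ≤ k.val then
      (if p.1 u = d u (restrictSb (Nat.succ_le_succ hu.2) sb) (pathHist p u) then 1 else 0)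
    else 1

/-- Path-version of `weight`. -/
noncomputable def weightP (g' : ∀ t : Fin τ, 𝓐 t → Hist 𝓐 𝓛 t → ℝ)
    (tp : ℕ) (k : Fin τ) (sb : SbarN 𝓐 (k.val + 1))
    (p : (∀ t : Fin τ, 𝓐 t) × (∀ t : Fin τ, 𝓛 t)) : ℝ :=
  ∏ u : Fin τ,
    if hu : tp ≤ u.val ∧ u.val ≤ k.val then
      g' u (sb ⟨u, Nat.lt_succ_of_le hu.2⟩) (pathHist p u) / g' u (p.1 u) (pathHist p u)
    else 1

lemma term_integrable [∀ t, Fintype (𝓛 t)]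
    (M : Model 𝓐 𝓛 Ω) [IsFiniteMeasure M.μ]
    (hmeas : M.Meas) (hbdd : ∃ C, ∀ ω, |M.Y ω| ≤ C)
    (d : Policy 𝓐 𝓛) (g' : ∀ t : Fin τ, 𝓐 t → Hist 𝓐 𝓛 t → ℝ)
    (m : ∀ t : Fin τ, SbarN 𝓐 (t.val + 1) → 𝓐 t → Hist 𝓐 𝓛 t → ℝ)
    (tp : ℕ) (k : Fin τ) (sb : SbarN 𝓐 (k.val + 1)) :
    Integrable (fun ω => Dind M d tp k sb ω * weight M g' tp k sb ω *
      (M.qNext (qOf d m) k sb ω - m k sb (M.A k ω) (M.Hproc k ω))) M.μ := by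
  obtain ⟨C, hC⟩ := hbdd
  have hYint : Integrable M.Y M.μ :=
    Integrable.mono' (integrable_const C) hmeas.2.2.aestronglyMeasurable
      (Filter.Eventually.of_forall fun ω => by simpa [Real.norm_eq_abs] using hC ω)
  have hqΦ : ∀ p : (∀ t : Fin τ, 𝓐 t) × (∀ t : Fin τ, 𝓛 t), Integrable (fun ω =>
      (if h : k.val + 1 < τ then
        qOf d m ⟨k.val + 1, h⟩ sb (p.1 ⟨k.val + 1, h⟩) (pathHist p ⟨k.val + 1, h⟩)
      else M.Y ω)) M.μ := by
    intro p
    by_cases h : k.val + 1 < τ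
    · simp only [dif_pos h]; exact integrable_const _
    · simp only [dif_neg h]; exact hYint
  exact integrable_pathFn M hmeas (fun p ω =>
      DindP d tp k sb p * weightP g' tp k sb p *
      ((if h : k.val + 1 < τ then
        qOf d m ⟨k.val + 1, h⟩ sb (p.1 ⟨k.val + 1, h⟩) (pathHist p ⟨k.val + 1, h⟩)
      else M.Y ω) - m k sb (p.1 k) (pathHist p k)))
    (fun p => ((hqΦ p).sub (integrable_const _)).const_mul _)

lemma qNext_integrable [∀ t, Fintype (𝓛 t)]
    (M : Model 𝓐 𝓛 Ω) [IsFiniteMeasure M.μ]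
    (hmeas : M.Meas) (hbdd : ∃ C, ∀ ω, |M.Y ω| ≤ C)
    (d : Policy 𝓐 𝓛)
    (m : ∀ t : Fin τ, SbarN 𝓐 (t.val + 1) → 𝓐 t → Hist 𝓐 𝓛 t → ℝ)
    (k : Fin τ) (sb : SbarN 𝓐 (k.val + 1)) :
    Integrable (M.qNext (qOf d m) k sb) M.μ := by
  obtain ⟨C, hC⟩ := hbdd
  have hYint : Integrable M.Y M.μ :=
    Integrable.mono' (integrable_const C) hmeas.2.2.aestronglyMeasurable
      (Filter.Eventually.of_forall fun ω => by simpa [Real.norm_eq_abs] using hC ω)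
  refine integrable_pathFn M hmeas (fun p ω =>
      (if h : k.val + 1 < τ then
        qOf d m ⟨k.val + 1, h⟩ sb (p.1 ⟨k.val + 1, h⟩) (pathHist p ⟨k.val + 1, h⟩)
      else M.Y ω)) (fun p => ?_)
  by_cases h : k.val + 1 < τ
  · simp only [dif_pos h]; exact integrable_const _
  · simp only [dif_neg h]; exact hYint

lemma term_integral_zero [∀ t, Fintype (𝓛 t)]
    (M : Model 𝓐 𝓛 Ω) [IsProbabilityMeasure M.μ]
    (hmeas : M.Meas) (hbdd : ∃ C, ∀ ω, |M.Y ω| ≤ C) (hpos : M.Positivity)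
    (d : Policy 𝓐 𝓛)
    (m : ∀ t : Fin τ, SbarN 𝓐 (t.val + 1) → 𝓐 t → Hist 𝓐 𝓛 t → ℝ)
    (hm : IsSeqReg M d m) (tp : ℕ) (k : Fin τ) (sb : SbarN 𝓐 (k.val + 1)) :
    ∫ ω, Dind M d tp k sb ω * weight M M.g tp k sb ω *
      (M.qNext (qOf d m) k sb ω - m k sb (M.A k ω) (M.Hproc k ω)) ∂M.μ = 0 := by
  classical
  set f : Ω → ℝ := fun ω => Dind M d tp k sb ω * weight M M.g tp k sb ω *
      (M.qNext (qOf d m) k sb ω - m k sb (M.A k ω) (M.Hproc k ω)) with hfdef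
  have hfint : Integrable f M.μ := term_integrable M hmeas hbdd d M.g m tp k sb
  have hqint : Integrable (M.qNext (qOf d m) k sb) M.μ :=
    qNext_integrable M hmeas hbdd d m k sb
  have hrep : f = fun ω => ∑ x : 𝓐 k × Hist 𝓐 𝓛 k,
      Set.indicator (M.condEvent k x.1 x.2) f ω := by
    funext ω
    rw [Finset.sum_eq_single (M.A k ω, M.Hproc k ω)]
    · have hmem : ω ∈ M.condEvent k (M.A k ω) (M.Hproc k ω) := ⟨rfl, rfl⟩
      exact (Set.indicator_of_mem hmem f).symm
    · intro x _ hx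
      refine Set.indicator_of_notMem (fun hmem => hx ?_) f
      exact Prod.ext hmem.1.symm hmem.2.symm
    · simp
  rw [hrep, integral_finset_sum _ (fun x _ =>
    hfint.indicator (M.measurableSet_condEvent hmeas k x.1 x.2))]
  refine Finset.sum_eq_zero fun x _ => ?_
  rw [integral_indicator (M.measurableSet_condEvent hmeas k x.1 x.2)]
  set S := M.condEvent k x.1 x.2 with hSdef
  have hS : MeasurableSet S := M.measurableSet_condEvent hmeas k x.1 x.2
  obtain ⟨ω₀, hω₀⟩ : S.Nonempty :=
    MeasureTheory.nonempty_of_measure_ne_zero (hpos k x.1 x.2).ne'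
  have hT : (M.μ S).toReal ≠ 0 :=
    (ENNReal.toReal_pos (hpos k x.1 x.2).ne' (measure_ne_top _ _)).ne'
  have hcongr : Set.EqOn f (fun ω => (Dind M d tp k sb ω₀ * weight M M.g tp k sb ω₀) *
      (M.qNext (qOf d m) k sb ω - m k sb x.1 x.2)) S := by
    intro ω hω
    have hA : M.A k ω = x.1 := hω.1
    have hH : M.Hproc k ω = x.2 := hω.2
    show Dind M d tp k sb ω * weight M M.g tp k sb ω *
      (M.qNext (qOf d m) k sb ω - m k sb (M.A k ω) (M.Hproc k ω)) = _
    rw [Dind_eq_on d tp sb hω hω₀, weight_eq_on M.g tp sb hω hω₀, hA, hH]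
  rw [setIntegral_congr_fun hS hcongr, integral_const_mul]
  have hsub : ∫ ω in S, (M.qNext (qOf d m) k sb ω - m k sb x.1 x.2) ∂M.μ = 0 := by
    rw [integral_sub hqint.integrableOn
      (integrableOn_const (measure_ne_top _ _)),
      setIntegral_const, hm k sb x.1 x.2]
    rw [condExpOn, smul_eq_mul, measureReal_def, ← hSdef]
    field_simp; ring
  rw [hsub, mul_zero]

/-- **The canonical gradient is mean-zero**: when the nuisances are the truth,
`η = (g_t, m_t)` with `g_t` the true treatment probabilities and `m_t` the true sequential
regressions, the pseudo-outcome integrates to the parameter: `E[φ_1(Z; η)] = θ`,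
i.e. the canonical gradient `φ̄_1(Z) = φ_1(Z; η) − θ` has mean zero. -/
theorem canonical_gradient_mean_zero
    [∀ t, Nonempty (𝓐 t)] [∀ t, Fintype (𝓛 t)] [∀ t, Nonempty (𝓛 t)]
    (hτ : 0 < τ)
    (M : Model 𝓐 𝓛 Ω) [IsProbabilityMeasure M.μ]
    (hmeas : M.Meas) (hbdd : ∃ C, ∀ ω, |M.Y ω| ≤ C)
    (hpos : M.Positivity)
    (d : Policy 𝓐 𝓛)
    -- the true sequential regression functions
    (m : ∀ t : Fin τ, SbarN 𝓐 (t.val + 1) → 𝓐 t → Hist 𝓐 𝓛 t → ℝ)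
    (hm : IsSeqReg M d m) :
    (∫ ω, phi M d M.g m 0 (emptySbar 𝓐) ω ∂M.μ) = theta hτ M d m := by
  classical
  obtain ⟨C, hC⟩ := hbdd
  have hlastint : Integrable (fun ω =>
      qOf d m ⟨0, hτ⟩ (emptySbar 𝓐) (M.A ⟨0, hτ⟩ ω) (M.Hproc ⟨0, hτ⟩ ω)) M.μ :=
    integrable_pathFn M hmeas (fun p _ =>
      qOf d m ⟨0, hτ⟩ (emptySbar 𝓐) (p.1 ⟨0, hτ⟩) (pathHist p ⟨0, hτ⟩))
      (fun p => integrable_const _)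
  have hphi : ∀ ω, phi M d M.g m 0 (emptySbar 𝓐) ω =
      (∑ k : Fin τ, ∑ e : Ext 𝓐 0 k,
        Dind M d 0 k (mergeExt (emptySbar 𝓐) e) ω *
          weight M M.g 0 k (mergeExt (emptySbar 𝓐) e) ω *
          (M.qNext (qOf d m) k (mergeExt (emptySbar 𝓐) e) ω -
            m k (mergeExt (emptySbar 𝓐) e) (M.A k ω) (M.Hproc k ω))) +
      qOf d m ⟨0, hτ⟩ (emptySbar 𝓐) (M.A ⟨0, hτ⟩ ω) (M.Hproc ⟨0, hτ⟩ ω) := by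
    intro ω
    unfold phi
    rw [dif_pos hτ]
    congr 1
  simp only [hphi]
  rw [integral_add (integrable_finset_sum _ fun k _ => integrable_finset_sum _ fun e _ =>
      term_integrable M hmeas ⟨C, hC⟩ d M.g m 0 k (mergeExt (emptySbar 𝓐) e)) hlastint,
    integral_finset_sum _ (fun k _ => integrable_finset_sum _ fun e _ =>
      term_integrable M hmeas ⟨C, hC⟩ d M.g m 0 k (mergeExt (emptySbar 𝓐) e))]
  have hzero : ∀ k : Fin τ, (∫ ω, ∑ e : Ext 𝓐 0 k,
      Dind M d 0 k (mergeExt (emptySbar 𝓐) e) ω *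
        weight M M.g 0 k (mergeExt (emptySbar 𝓐) e) ω *
        (M.qNext (qOf d m) k (mergeExt (emptySbar 𝓐) e) ω -
          m k (mergeExt (emptySbar 𝓐) e) (M.A k ω) (M.Hproc k ω)) ∂M.μ) = 0 := by
    intro k
    rw [integral_finset_sum _ (fun e _ =>
      term_integrable M hmeas ⟨C, hC⟩ d M.g m 0 k (mergeExt (emptySbar 𝓐) e))]
    exact Finset.sum_eq_zero fun e _ =>
      term_integral_zero M hmeas ⟨C, hC⟩ hpos d m hm 0 k (mergeExt (emptySbar 𝓐) e)
  rw [Finset.sum_congr rfl fun k _ => hzero k]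
  simp [theta]


end GLMTP
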